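/- arXiv:2103.09634 — 2 statements merged into one kernel-verified Lean document; each statement's English description precedes it below -/
import Mathlib

section
/- Assume (H1)–(H3). Let τ ∈ [0, 1], ε > 0, and let n be a positive C² function on closure(Ω) × [−A, A] satisfying −∂_xx n − ε² ∂_θθ n + Ln = n (R − τρ − (1 − τ) n) on Ω × (−A, A), where ρ(x) = ∫_{−A}^{A} n(x, θ) dθ, with Neumann boundary conditions in both variables. Let (μ, ξ) be a normalized principal eigenpair of the ε-eigenproblem. Then −μ ≤ (sup_{Ω × (−A,A)} ξ²) · max(1, 2A) · ∫_Ω ∫_{−A}^{A} n(x, θ) dθ dx. -/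
open MeasureTheory Set Real Filter Topology

noncomputable section

/-- Partial derivative in the first (spatial) variable. -/
def pdx (f : ℝ → ℝ → ℝ) (x θ : ℝ) : ℝ := deriv (fun x' => f x' θ) x

/-- Partial derivative in the second (trait) variable. -/
def pdt (f : ℝ → ℝ → ℝ) (x θ : ℝ) : ℝ := deriv (fun θ' => f x θ') θ

/-- The nonlocal dispersion operator `L`, acting in the spatial variable. -/
def nlL (Ω : Set ℝ) (K : ℝ → ℝ) (f : ℝ → ℝ → ℝ) (x θ : ℝ) : ℝ :=
  ∫ y in Ω, (f x θ - f y θ) * K (x - y)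

/-- Total population density at `x`. -/
def rhoTot (A : ℝ) (n : ℝ → ℝ → ℝ) (x : ℝ) : ℝ := ∫ θ in (-A)..A, n x θ

/-- A positive solution of equation (E) with parameter `ε`:
a positive `C²` function satisfying the equation on `Ω × (-A, A)` together with
Neumann boundary conditions in both variables (`Endp` is the set of endpoints of the
intervals composing `Ω`). -/
def IsPosSolE (Ω Endp : Set ℝ) (A : ℝ) (K : ℝ → ℝ) (R : ℝ → ℝ → ℝ)
    (ε : ℝ) (n : ℝ → ℝ → ℝ) : Prop :=
  ContDiff ℝ 2 (Function.uncurry n) ∧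
  (∀ x ∈ closure Ω, ∀ θ ∈ Icc (-A) A, 0 < n x θ) ∧
  (∀ x ∈ Ω, ∀ θ ∈ Ioo (-A) A,
    -ε ^ 2 * pdt (pdt n) x θ - pdx (pdx n) x θ + nlL Ω K n x θ
      = n x θ * (R x θ - rhoTot A n x)) ∧
  (∀ x ∈ Endp, ∀ θ ∈ Icc (-A) A, pdx n x θ = 0) ∧
  (∀ x ∈ closure Ω, pdt n x A = 0 ∧ pdt n x (-A) = 0)

/-- A normalized principal eigenpair of the ε-eigenproblem. -/
def IsEigenpairE (Ω Endp : Set ℝ) (A : ℝ) (K : ℝ → ℝ) (R : ℝ → ℝ → ℝ)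
    (ε μ : ℝ) (ξ : ℝ → ℝ → ℝ) : Prop :=
  ContDiff ℝ 2 (Function.uncurry ξ) ∧
  (∀ x ∈ closure Ω, ∀ θ ∈ Icc (-A) A, 0 < ξ x θ) ∧
  (∫ x in Ω, ∫ θ in (-A)..A, (ξ x θ) ^ 2) = 1 ∧
  (∀ x ∈ Ω, ∀ θ ∈ Ioo (-A) A,
    -pdx (pdx ξ) x θ - ε ^ 2 * pdt (pdt ξ) x θ + nlL Ω K ξ x θ - R x θ * ξ x θ
      = μ * ξ x θ) ∧
  (∀ x ∈ Endp, ∀ θ ∈ Icc (-A) A, pdx ξ x θ = 0) ∧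
  (∀ x ∈ closure Ω, pdt ξ x A = 0 ∧ pdt ξ x (-A) = 0)

lemma slice_x {f : ℝ → ℝ → ℝ} {k : ℕ} (hf : ContDiff ℝ k (Function.uncurry f)) (θ : ℝ) :
    ContDiff ℝ k (fun x => f x θ) :=
  hf.comp (contDiff_id.prodMk contDiff_const)

lemma slice_t {f : ℝ → ℝ → ℝ} {k : ℕ} (hf : ContDiff ℝ k (Function.uncurry f)) (x : ℝ) :
    ContDiff ℝ k (fun θ => f x θ) :=
  hf.comp (contDiff_const.prodMk contDiff_id)

lemma uncurry_pdx_eq {f : ℝ → ℝ → ℝ} (hf : Differentiable ℝ (Function.uncurry f)) :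
    Function.uncurry (pdx f) = fun p : ℝ × ℝ => fderiv ℝ (Function.uncurry f) p (1, 0) := by
  funext p
  obtain ⟨x, θ⟩ := p
  have h1 : HasDerivAt (fun x' : ℝ => (x', θ)) ((1 : ℝ), (0 : ℝ)) x :=
    (hasDerivAt_id x).prodMk (hasDerivAt_const x θ)
  exact (((hf (x, θ)).hasFDerivAt).comp_hasDerivAt x h1).deriv

lemma uncurry_pdt_eq {f : ℝ → ℝ → ℝ} (hf : Differentiable ℝ (Function.uncurry f)) :
    Function.uncurry (pdt f) = fun p : ℝ × ℝ => fderiv ℝ (Function.uncurry f) p (0, 1) := by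
  funext p
  obtain ⟨x, θ⟩ := p
  have h1 : HasDerivAt (fun θ' : ℝ => (x, θ')) ((0 : ℝ), (1 : ℝ)) θ :=
    (hasDerivAt_const θ x).prodMk (hasDerivAt_id θ)
  exact (((hf (x, θ)).hasFDerivAt).comp_hasDerivAt θ h1).deriv

lemma contDiff_uncurry_pdx {f : ℝ → ℝ → ℝ} (hf : ContDiff ℝ 2 (Function.uncurry f)) :
    ContDiff ℝ 1 (Function.uncurry (pdx f)) := by
  rw [uncurry_pdx_eq (hf.differentiable (by norm_num))]
  exact (hf.fderiv_right (by norm_num)).clm_apply contDiff_const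

lemma contDiff_uncurry_pdt {f : ℝ → ℝ → ℝ} (hf : ContDiff ℝ 2 (Function.uncurry f)) :
    ContDiff ℝ 1 (Function.uncurry (pdt f)) := by
  rw [uncurry_pdt_eq (hf.differentiable (by norm_num))]
  exact (hf.fderiv_right (by norm_num)).clm_apply contDiff_const

lemma continuous_uncurry_pdx {f : ℝ → ℝ → ℝ} (hf : ContDiff ℝ 1 (Function.uncurry f)) :
    Continuous (Function.uncurry (pdx f)) := by
  rw [uncurry_pdx_eq (hf.differentiable (by norm_num))]
  have h := hf.fderiv_right (m := 0) (by norm_num)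
  rw [contDiff_zero] at h
  exact h.clm_apply continuous_const

lemma continuous_uncurry_pdt {f : ℝ → ℝ → ℝ} (hf : ContDiff ℝ 1 (Function.uncurry f)) :
    Continuous (Function.uncurry (pdt f)) := by
  rw [uncurry_pdt_eq (hf.differentiable (by norm_num))]
  have h := hf.fderiv_right (m := 0) (by norm_num)
  rw [contDiff_zero] at h
  exact h.clm_apply continuous_const

lemma continuous_param {X : Type*} [MetricSpace X] [ProperSpace X]
    {F : X → ℝ → ℝ} {s : Set ℝ}
    (hF : Continuous fun q : X × ℝ => F q.1 q.2)
    (hs : MeasurableSet s) (hvol : volume s ≠ ⊤) (hsc : IsCompact (closure s)) :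
    Continuous fun p => ∫ y in s, F p y := by
  rw [continuous_iff_continuousAt]
  intro p₀
  have hW : IsCompact (Metric.closedBall p₀ 1 ×ˢ closure s) :=
    (isCompact_closedBall p₀ 1).prod hsc
  obtain ⟨M, hM⟩ := hW.exists_bound_of_continuousOn hF.continuousOn
  apply MeasureTheory.continuousAt_of_dominated (bound := fun _ => M)
  · filter_upwards with p
    exact (hF.comp (Continuous.prodMk_right p)).aestronglyMeasurable
  · filter_upwards [Metric.closedBall_mem_nhds p₀ one_pos] with p hp
    filter_upwards [ae_restrict_mem hs] with y hy
    exact hM (p, y) (mem_prod.2 ⟨hp, subset_closure hy⟩)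
  · exact (integrableOn_const hvol)
  · filter_upwards with y
    exact (hF.comp (continuous_id.prodMk continuous_const)).continuousAt

lemma amgm_key {p q u v : ℝ} (hp : 0 < p) (hq : 0 < q) :
    0 ≤ (u - v) ^ 2 - (p - q) * (u ^ 2 / p - v ^ 2 / q) := by
  have e : u ^ 2 / p - v ^ 2 / q = (q * u ^ 2 - p * v ^ 2) / (p * q) := by
    field_simp
  rw [e, sub_nonneg, ← mul_div_assoc, div_le_iff₀ (by positivity)]
  nlinarith [sq_nonneg (q * u - p * v)]

lemma cd2_unpack {g : ℝ → ℝ} (hg : ContDiff ℝ 2 g) :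
    Differentiable ℝ g ∧ Differentiable ℝ (deriv g) ∧ Continuous (deriv g) ∧
      Continuous (deriv (deriv g)) := by
  have h2 : ContDiff ℝ ((1 : WithTop ℕ∞) + 1) g := by
    rw [one_add_one_eq_two]; exact hg
  obtain ⟨hd, -, h1⟩ := contDiff_succ_iff_deriv.mp h2
  have h1' : ContDiff ℝ ((0 : WithTop ℕ∞) + 1) (deriv g) := by
    rw [zero_add]; exact h1
  obtain ⟨hd1, -, h0⟩ := contDiff_succ_iff_deriv.mp h1'
  exact ⟨hd, hd1, h1.continuous, contDiff_zero.mp h0⟩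

lemma picone_1d {g h : ℝ → ℝ} {α β : ℝ} (hαβ : α < β)
    (hg : ContDiff ℝ 2 g) (hh : ContDiff ℝ 2 h)
    (hpos : ∀ x ∈ Icc α β, 0 < h x)
    (hbα : deriv g α = 0) (hbβ : deriv g β = 0)
    (hcα : deriv h α = 0) (hcβ : deriv h β = 0) :
    0 ≤ ∫ x in Ioo α β,
      (-(deriv (deriv g) x) * g x + deriv (deriv h) x * (g x ^ 2 / h x)) := by
  obtain ⟨hgd, hgd1, hgc1, hgc2⟩ := cd2_unpack hg
  obtain ⟨hhd, hhd1, hhc1, hhc2⟩ := cd2_unpack hh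
  set I : ℝ → ℝ := fun x => -(deriv (deriv g) x) * g x + deriv (deriv h) x * (g x ^ 2 / h x)
    with hI
  set D : ℝ → ℝ := fun x => (deriv g x - g x * deriv h x / h x) ^ 2 with hD
  set w : ℝ → ℝ := fun x => deriv g x * g x - deriv h x * (g x ^ 2 / h x) with hw
  have hwd : ∀ x ∈ uIcc α β, HasDerivAt w (D x - I x) x := by
    rw [uIcc_of_le hαβ.le]
    intro x hx
    have hhx : h x ≠ 0 := (hpos x hx).ne'
    have H1 : HasDerivAt (fun y => deriv g y * g y)
        (deriv (deriv g) x * g x + deriv g x * deriv g x) x :=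
      ((hgd1 x).hasDerivAt).mul ((hgd x).hasDerivAt)
    have H2 : HasDerivAt (fun y => g y ^ 2) ((2 : ℕ) * g x ^ 1 * deriv g x) x :=
      ((hgd x).hasDerivAt).pow 2
    have H3 : HasDerivAt (fun y => g y ^ 2 / h y)
        ((((2 : ℕ) * g x ^ 1 * deriv g x) * h x - g x ^ 2 * deriv h x) / h x ^ 2) x :=
      H2.div ((hhd x).hasDerivAt) hhx
    have H4 := ((hhd1 x).hasDerivAt).mul H3
    have H5 := H1.sub H4
    refine H5.congr_deriv ?_
    simp only [hD, hI]
    push_cast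
    field_simp
    ring
  have hIcont : ContinuousOn I (Icc α β) := by
    apply ContinuousOn.add
    · exact (hgc2.continuousOn.neg.mul hg.continuous.continuousOn)
    · exact hhc2.continuousOn.mul
        (((hg.continuous.pow 2).continuousOn).div hh.continuous.continuousOn
          (fun x hx => (hpos x hx).ne'))
  have hDcont : ContinuousOn D (Icc α β) := by
    apply ContinuousOn.pow
    exact hgc1.continuousOn.sub
      ((hg.continuous.continuousOn.mul hhc1.continuousOn).div hh.continuous.continuousOn
        (fun x hx => (hpos x hx).ne'))
  have hIint : IntervalIntegrable I volume α β :=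
    (hIcont.mono (by rw [uIcc_of_le hαβ.le])).intervalIntegrable
  have hDint : IntervalIntegrable D volume α β :=
    (hDcont.mono (by rw [uIcc_of_le hαβ.le])).intervalIntegrable
  have hftc : ∫ x in α..β, (D x - I x) = w β - w α :=
    intervalIntegral.integral_eq_sub_of_hasDerivAt hwd (hDint.sub hIint)
  have hwα : w α = 0 := by simp [hw, hbα, hcα]
  have hwβ : w β = 0 := by simp [hw, hbβ, hcβ]
  have h0 : ∫ x in α..β, I x = ∫ x in α..β, D x := by
    have := intervalIntegral.integral_sub hDint hIint
    rw [hftc, hwα, hwβ] at this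
    linarith
  have heq : ∫ x in Ioo α β, I x = ∫ x in α..β, I x := by
    rw [intervalIntegral.integral_of_le hαβ.le, integral_Ioc_eq_integral_Ioo]
  rw [heq, h0]
  exact intervalIntegral.integral_nonneg hαβ.le (fun u _ => sq_nonneg _)

lemma prod_integrable {F : ℝ → ℝ → ℝ} {s t : Set ℝ} {U : Set (ℝ × ℝ)}
    (hU : IsCompact U) (hsub : s ×ˢ t ⊆ U)
    (hF : ContinuousOn (Function.uncurry F) U) :
    Integrable (Function.uncurry F) ((volume.restrict s).prod (volume.restrict t)) := by
  rw [Measure.prod_restrict, ← MeasureTheory.Measure.volume_eq_prod]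
  exact (hF.integrableOn_compact hU).mono_set hsub



set_option maxHeartbeats 2000000 in
/-- lower bound on the total mass of any positive solution of the
homotopy equation (E_τ) in terms of the principal eigenvalue. -/
theorem mass_lower_bound_homotopy
    (m : ℕ) (a b : Fin (m + 1) → ℝ) (Ω : Set ℝ)
    (hab : ∀ i, a i < b i)
    (hord : ∀ i j : Fin (m + 1), i < j → b i < a j)
    (hΩ : Ω = ⋃ i, Ioo (a i) (b i))
    (A : ℝ) (hA : 0 < A)
    (R : ℝ → ℝ → ℝ) (C_R : ℝ)
    (hRsmooth : ContDiff ℝ 1 (Function.uncurry R))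
    (hRbound : ∀ x ∈ closure Ω, ∀ θ ∈ Icc (-A) A,
      |R x θ| ≤ C_R ∧ |pdx R x θ| ≤ C_R ∧ |pdt R x θ| ≤ C_R)
    (K : ℝ → ℝ) (c_K C_K : ℝ)
    (hKsmooth : ContDiff ℝ 1 K)
    (hKeven : ∀ x, K (-x) = K x)
    (hcK : 0 < c_K)
    (hKbound : ∀ x, c_K ≤ K x ∧ K x ≤ C_K ∧ |deriv K x| ≤ C_K)
    (τ ε : ℝ) (hτ : τ ∈ Icc (0 : ℝ) 1) (hε : 0 < ε)
    (n : ℝ → ℝ → ℝ)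
    (hC2 : ContDiff ℝ 2 (Function.uncurry n))
    (hpos : ∀ x ∈ closure Ω, ∀ θ ∈ Icc (-A) A, 0 < n x θ)
    (hpde : ∀ x ∈ Ω, ∀ θ ∈ Ioo (-A) A,
      -pdx (pdx n) x θ - ε ^ 2 * pdt (pdt n) x θ + nlL Ω K n x θ
        = n x θ * (R x θ - τ * rhoTot A n x - (1 - τ) * n x θ))
    (hNx : ∀ x ∈ range a ∪ range b, ∀ θ ∈ Icc (-A) A, pdx n x θ = 0)
    (hNt : ∀ x ∈ closure Ω, pdt n x A = 0 ∧ pdt n x (-A) = 0)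
    (μ : ℝ) (ξ : ℝ → ℝ → ℝ)
    (hξ : IsEigenpairE Ω (range a ∪ range b) A K R ε μ ξ) :
    -μ ≤ sSup ((fun p : ℝ × ℝ => (ξ p.1 p.2) ^ 2) '' (Ω ×ˢ Ioo (-A) A)) *
        max 1 (2 * A) * ∫ x in Ω, ∫ θ in (-A)..A, n x θ := by
  obtain ⟨hξC2, hξpos, hξnorm, hξpde, hξNx, hξNt⟩ := hξ
  have h01 : (0:ℝ) ≤ τ := hτ.1
  have h10 : τ ≤ 1 := hτ.2
  have hAA : -A < A := by linarith
  set T : Set ℝ := Ioo (-A) A with hT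
  have hTm : MeasurableSet T := measurableSet_Ioo
  have hΩm : MeasurableSet Ω := by
    rw [hΩ]; exact MeasurableSet.iUnion fun i => measurableSet_Ioo
  have hIccsub : ∀ i, Icc (a i) (b i) ⊆ closure Ω := by
    intro i
    have h1 : Ioo (a i) (b i) ⊆ Ω := by
      rw [hΩ]; exact subset_iUnion (fun i => Ioo (a i) (b i)) i
    rw [← closure_Ioo (hab i).ne]
    exact closure_mono h1
  have hcΩsub : closure Ω ⊆ ⋃ i, Icc (a i) (b i) :=
    closure_minimal (by rw [hΩ]; exact iUnion_mono fun i => Ioo_subset_Icc_self)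
      (isClosed_iUnion_of_finite fun i => isClosed_Icc)
  have hcΩcomp : IsCompact (closure Ω) :=
    IsCompact.of_isClosed_subset (isCompact_iUnion fun i => isCompact_Icc)
      isClosed_closure hcΩsub
  have hΩvol : volume Ω ≠ ⊤ :=
    ((measure_mono subset_closure).trans_lt hcΩcomp.measure_lt_top).ne
  have hTvol : volume T ≠ ⊤ := by
    rw [hT, Real.volume_Ioo]; exact ENNReal.ofReal_ne_top
  have hTsub : T ⊆ Icc (-A) A := Ioo_subset_Icc_self
  set U : Set (ℝ × ℝ) := closure Ω ×ˢ Icc (-A) A with hUdef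
  have hUcomp : IsCompact U := hcΩcomp.prod isCompact_Icc
  have hUsub : Ω ×ˢ T ⊆ U := prod_mono subset_closure hTsub
  -- continuity inventory
  have hnc : Continuous (Function.uncurry n) := hC2.continuous
  have hξcc : Continuous (Function.uncurry ξ) := hξC2.continuous
  have hKc : Continuous K := hKsmooth.continuous
  have hnxx : Continuous (Function.uncurry (pdx (pdx n))) :=
    continuous_uncurry_pdx (contDiff_uncurry_pdx hC2)
  have hntt : Continuous (Function.uncurry (pdt (pdt n))) :=
    continuous_uncurry_pdt (contDiff_uncurry_pdt hC2)
  have hξxx : Continuous (Function.uncurry (pdx (pdx ξ))) :=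
    continuous_uncurry_pdx (contDiff_uncurry_pdx hξC2)
  have hξtt : Continuous (Function.uncurry (pdt (pdt ξ))) :=
    continuous_uncurry_pdt (contDiff_uncurry_pdt hξC2)
  have hρc : Continuous (rhoTot A n) := by
    have he : rhoTot A n = fun x => ∫ θ in Ioc (-A) A, n x θ :=
      funext fun x => intervalIntegral.integral_of_le hAA.le
    rw [he]
    exact continuous_param (F := n) hnc measurableSet_Ioc
      (by rw [Real.volume_Ioc]; exact ENNReal.ofReal_ne_top)
      (by rw [closure_Ioc hAA.ne]; exact isCompact_Icc)
  have hLξc : Continuous (Function.uncurry (nlL Ω K ξ)) := by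
    have hc : Continuous fun q : (ℝ × ℝ) × ℝ => (ξ q.1.1 q.1.2 - ξ q.2 q.1.2) * K (q.1.1 - q.2) :=
      ((hξcc.comp continuous_fst).sub
        (hξcc.comp (continuous_snd.prodMk continuous_fst.snd))).mul
        (hKc.comp (continuous_fst.fst.sub continuous_snd))
    exact continuous_param (F := fun (p : ℝ × ℝ) y => (ξ p.1 p.2 - ξ y p.2) * K (p.1 - y)) hc
      hΩm hΩvol hcΩcomp
  have hLnc : Continuous (Function.uncurry (nlL Ω K n)) := by
    have hc : Continuous fun q : (ℝ × ℝ) × ℝ => (n q.1.1 q.1.2 - n q.2 q.1.2) * K (q.1.1 - q.2) :=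
      ((hnc.comp continuous_fst).sub
        (hnc.comp (continuous_snd.prodMk continuous_fst.snd))).mul
        (hKc.comp (continuous_fst.fst.sub continuous_snd))
    exact continuous_param (F := fun (p : ℝ × ℝ) y => (n p.1 p.2 - n y p.2) * K (p.1 - y)) hc
      hΩm hΩvol hcΩcomp
  -- the combination functions
  set P : ℝ → ℝ → ℝ := fun x θ => ξ x θ ^ 2 / n x θ with hPdef
  set Φ : ℝ → ℝ → ℝ := fun x θ => -(pdx (pdx ξ) x θ) * ξ x θ + pdx (pdx n) x θ * P x θ with hΦdef
  set Ψ : ℝ → ℝ → ℝ := fun x θ => -(pdt (pdt ξ) x θ) * ξ x θ + pdt (pdt n) x θ * P x θ with hΨdef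
  set Λf : ℝ → ℝ → ℝ := fun x θ => nlL Ω K ξ x θ * ξ x θ - nlL Ω K n x θ * P x θ with hΛdef
  set cf : ℝ → ℝ → ℝ := fun x θ => τ * rhoTot A n x + (1 - τ) * n x θ with hcfdef
  have hcfc : Continuous (Function.uncurry cf) :=
    (continuous_const.mul (hρc.comp continuous_fst)).add (continuous_const.mul hnc)
  have hPco : ContinuousOn (Function.uncurry P) U :=
    ((hξcc.pow 2).continuousOn).div hnc.continuousOn
      (fun p hp => (hpos p.1 hp.1 p.2 hp.2).ne')
  have hΦco : ContinuousOn (Function.uncurry Φ) U :=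
    (hξxx.neg.continuousOn.mul hξcc.continuousOn).add (hnxx.continuousOn.mul hPco)
  have hΨco : ContinuousOn (Function.uncurry Ψ) U :=
    (hξtt.neg.continuousOn.mul hξcc.continuousOn).add (hntt.continuousOn.mul hPco)
  have hΛco : ContinuousOn (Function.uncurry Λf) U :=
    (hLξc.continuousOn.mul hξcc.continuousOn).sub (hLnc.continuousOn.mul hPco)
  have hξ2co : ContinuousOn (Function.uncurry fun x θ => ξ x θ ^ 2) U :=
    (hξcc.pow 2).continuousOn
  have hξ2cco : ContinuousOn (Function.uncurry fun x θ => ξ x θ ^ 2 * cf x θ) U :=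
    ((hξcc.pow 2).mul hcfc).continuousOn
  -- integration toolbox
  have pack : ∀ F : ℝ → ℝ → ℝ, ContinuousOn (Function.uncurry F) U →
      Integrable (Function.uncurry F) ((volume.restrict Ω).prod (volume.restrict T)) :=
    fun F hF => prod_integrable hUcomp hUsub hF
  have swap : ∀ F : ℝ → ℝ → ℝ, ContinuousOn (Function.uncurry F) U →
      ∫ x in Ω, ∫ θ in T, F x θ = ∫ θ in T, ∫ x in Ω, F x θ :=
    fun F hF => integral_integral_swap (pack F hF)
  have innerInt : ∀ F : ℝ → ℝ → ℝ, ContinuousOn (Function.uncurry F) U →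
      IntegrableOn (fun x => ∫ θ in T, F x θ) Ω :=
    fun F hF => (pack F hF).integral_prod_left
  have sliceT : ∀ F : ℝ → ℝ → ℝ, ContinuousOn (Function.uncurry F) U → ∀ x ∈ closure Ω,
      IntegrableOn (fun θ => F x θ) T := by
    intro F hF x hx
    have hco : ContinuousOn (fun θ => F x θ) (Icc (-A) A) :=
      hF.comp ((continuous_const.prodMk continuous_id).continuousOn)
        (fun θ' hθ' => ⟨hx, hθ'⟩)
    exact (hco.integrableOn_compact isCompact_Icc).mono_set hTsub
  have sliceO : ∀ F : ℝ → ℝ → ℝ, ContinuousOn (Function.uncurry F) U → ∀ θ ∈ Icc (-A) A,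
      IntegrableOn (fun x => F x θ) Ω := by
    intro F hF θ hθ
    have hco : ContinuousOn (fun x => F x θ) (closure Ω) :=
      hF.comp ((continuous_id.prodMk continuous_const).continuousOn)
        (fun x' hx' => ⟨hx', hθ⟩)
    exact (hco.integrableOn_compact hcΩcomp).mono_set subset_closure
  -- sup bound
  have hbdd : BddAbove ((fun p : ℝ × ℝ => ξ p.1 p.2 ^ 2) '' (Ω ×ˢ T)) :=
    ((hUcomp.image (hξcc.pow 2)).bddAbove).mono (image_mono hUsub)
  set S : ℝ := sSup ((fun p : ℝ × ℝ => ξ p.1 p.2 ^ 2) '' (Ω ×ˢ T)) with hSdef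
  have hSle : ∀ x ∈ Ω, ∀ θ ∈ T, ξ x θ ^ 2 ≤ S :=
    fun x hx θ hθ => le_csSup hbdd ⟨(x, θ), ⟨hx, hθ⟩, rfl⟩
  have hSpos : 0 ≤ S := by
    have hx0 : (a 0 + b 0)/2 ∈ Ω := by
      rw [hΩ]
      exact mem_iUnion.2 ⟨0, by constructor <;> nlinarith [hab 0]⟩
    have hθ0 : (0:ℝ) ∈ T := by constructor <;> linarith
    exact le_trans (sq_nonneg _) (hSle _ hx0 _ hθ0)
  have hρ0 : ∀ x ∈ closure Ω, 0 ≤ rhoTot A n x := fun x hx =>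
    intervalIntegral.integral_nonneg hAA.le fun θ hθ => (hpos x hx θ hθ).le
  have hcf0 : ∀ x ∈ closure Ω, ∀ θ ∈ Icc (-A) A, 0 ≤ cf x θ := by
    intro x hx θ hθ
    have h1 := hρ0 x hx
    have h2 := (hpos x hx θ hθ).le
    simp only [hcfdef]
    nlinarith
  have hIT : ∀ g : ℝ → ℝ, ∫ θ in (-A)..A, g θ = ∫ θ in T, g θ := fun g => by
    rw [intervalIntegral.integral_of_le hAA.le, integral_Ioc_eq_integral_Ioo]
  -- part Ψ
  have partΨ : ∀ x ∈ Ω, 0 ≤ ∫ θ in T, Ψ x θ := by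
    intro x hx
    have hx' := subset_closure hx
    exact picone_1d hAA (slice_t hξC2 x) (slice_t hC2 x)
      (fun θ hθ => hpos x hx' θ hθ)
      (hξNt x hx').2 (hξNt x hx').1 (hNt x hx').2 (hNt x hx').1
  -- disjointness
  have hdisj : Pairwise (Function.onFun Disjoint fun i => Ioo (a i) (b i)) := by
    intro i j hij
    rcases hij.lt_or_gt with h | h
    · have hb := hord i j h
      exact Set.disjoint_left.2 fun x hx hx' => by
        have := hx.2; have := hx'.1; linarith
    · have hb := hord j i h
      exact Set.disjoint_left.2 fun x hx hx' => by
        have := hx.1; have := hx'.2; linarith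
  -- part Φ
  have partΦ : ∀ θ ∈ T, 0 ≤ ∫ x in Ω, Φ x θ := by
    intro θ hθ
    have hθ' : θ ∈ Icc (-A) A := hTsub hθ
    have hint : IntegrableOn (fun x => Φ x θ) Ω := sliceO Φ hΦco θ hθ'
    rw [hΩ] at hint
    rw [hΩ, integral_iUnion (fun i => measurableSet_Ioo) hdisj hint]
    apply tsum_nonneg
    intro i
    exact picone_1d (hab i) (slice_x hξC2 θ) (slice_x hC2 θ)
      (fun x hx => hpos x (hIccsub i hx) θ hθ')
      (hξNx (a i) (Set.mem_union_left _ ⟨i, rfl⟩) θ hθ')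
      (hξNx (b i) (Set.mem_union_right _ ⟨i, rfl⟩) θ hθ')
      (hNx (a i) (Set.mem_union_left _ ⟨i, rfl⟩) θ hθ')
      (hNx (b i) (Set.mem_union_right _ ⟨i, rfl⟩) θ hθ')
  -- part Λ
  have partΛ : ∀ θ ∈ T, 0 ≤ ∫ x in Ω, Λf x θ := by
    intro θ hθ
    have hθ' : θ ∈ Icc (-A) A := hTsub hθ
    set G : ℝ → ℝ → ℝ := fun x y =>
      (ξ x θ - ξ y θ) * K (x - y) * ξ x θ - (n x θ - n y θ) * K (x - y) * P x θ with hGdef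
    have c1 : Continuous fun p : ℝ × ℝ => ξ p.1 θ :=
      hξcc.comp (continuous_fst.prodMk continuous_const)
    have c2 : Continuous fun p : ℝ × ℝ => ξ p.2 θ :=
      hξcc.comp (continuous_snd.prodMk continuous_const)
    have c3 : Continuous fun p : ℝ × ℝ => n p.1 θ :=
      hnc.comp (continuous_fst.prodMk continuous_const)
    have c4 : Continuous fun p : ℝ × ℝ => n p.2 θ :=
      hnc.comp (continuous_snd.prodMk continuous_const)
    have c5 : Continuous fun p : ℝ × ℝ => K (p.1 - p.2) :=
      hKc.comp (continuous_fst.sub continuous_snd)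
    have hGco : ContinuousOn (Function.uncurry G) (closure Ω ×ˢ closure Ω) := by
      apply ContinuousOn.sub
      · exact (((c1.sub c2).mul c5).mul c1).continuousOn
      · exact ((c3.sub c4).mul c5).continuousOn.mul
          ((((c1.pow 2).continuousOn)).div c3.continuousOn
            (fun p hp => (hpos p.1 hp.1 θ hθ').ne'))
    have hGint : Integrable (Function.uncurry G)
        ((volume.restrict Ω).prod (volume.restrict Ω)) :=
      prod_integrable (hcΩcomp.prod hcΩcomp) (prod_mono subset_closure subset_closure) hGco
    have hGsl1 : ∀ x ∈ closure Ω, IntegrableOn (fun y => G x y) Ω := by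
      intro x hx
      have hco : ContinuousOn (fun y => G x y) (closure Ω) :=
        hGco.comp ((continuous_const.prodMk continuous_id).continuousOn)
          (fun y' hy' => ⟨hx, hy'⟩)
      exact (hco.integrableOn_compact hcΩcomp).mono_set subset_closure
    have hGsl2 : ∀ x ∈ closure Ω, IntegrableOn (fun y => G y x) Ω := by
      intro x hx
      have hco : ContinuousOn (fun y => G y x) (closure Ω) :=
        hGco.comp ((continuous_id.prodMk continuous_const).continuousOn)
          (fun y' hy' => ⟨hy', hx⟩)
      exact (hco.integrableOn_compact hcΩcomp).mono_set subset_closure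
    have hΛeq : ∀ x ∈ closure Ω, Λf x θ = ∫ y in Ω, G x y := by
      intro x hx
      have h1 : IntegrableOn (fun y => (ξ x θ - ξ y θ) * K (x - y) * ξ x θ) Ω := by
        have hc : Continuous fun y => (ξ x θ - ξ y θ) * K (x - y) * ξ x θ :=
          (((continuous_const.sub (hξcc.comp (continuous_id.prodMk continuous_const))).mul
            (hKc.comp (continuous_const.sub continuous_id))).mul continuous_const)
        exact (hc.continuousOn.integrableOn_compact hcΩcomp).mono_set subset_closure
      have h2 : IntegrableOn (fun y => (n x θ - n y θ) * K (x - y) * P x θ) Ω := by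
        have hc : Continuous fun y => (n x θ - n y θ) * K (x - y) * P x θ :=
          (((continuous_const.sub (hnc.comp (continuous_id.prodMk continuous_const))).mul
            (hKc.comp (continuous_const.sub continuous_id))).mul continuous_const)
        exact (hc.continuousOn.integrableOn_compact hcΩcomp).mono_set subset_closure
      simp only [hΛdef, nlL]
      rw [← integral_mul_const, ← integral_mul_const, ← integral_sub h1 h2]
    have hswapG : ∫ x in Ω, ∫ y in Ω, G x y = ∫ x in Ω, ∫ y in Ω, G y x :=
      integral_integral_swap hGint
    have hGint' : Integrable (Function.uncurry fun x y => G y x)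
        ((volume.restrict Ω).prod (volume.restrict Ω)) := hGint.swap
    have hinner1 : IntegrableOn (fun x => ∫ y in Ω, G x y) Ω := hGint.integral_prod_left
    have hinner2 : IntegrableOn (fun x => ∫ y in Ω, G y x) Ω := hGint'.integral_prod_left
    have hkey : 0 ≤ ∫ x in Ω, ((∫ y in Ω, G x y) + ∫ y in Ω, G y x) := by
      apply setIntegral_nonneg hΩm
      intro x hx
      have hx' := subset_closure hx
      have e : (∫ y in Ω, G x y) + ∫ y in Ω, G y x = ∫ y in Ω, (G x y + G y x) :=
        (integral_add (hGsl1 x hx') (hGsl2 x hx')).symm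
      rw [e]
      apply setIntegral_nonneg hΩm
      intro y hy
      have hy' := subset_closure hy
      have hKe : K (y - x) = K (x - y) := by
        rw [← hKeven (x - y)]; ring_nf
      have hKnn : 0 ≤ K (x - y) := le_trans hcK.le (hKbound (x - y)).1
      have hamgm := amgm_key (u := ξ x θ) (v := ξ y θ)
        (hpos x hx' θ hθ') (hpos y hy' θ hθ')
      simp only [hGdef, hPdef, hKe]
      nlinarith [mul_nonneg hKnn hamgm]
    have ekey : ∫ x in Ω, ((∫ y in Ω, G x y) + ∫ y in Ω, G y x)
        = (∫ x in Ω, ∫ y in Ω, G x y) + ∫ x in Ω, ∫ y in Ω, G y x :=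
      integral_add hinner1 hinner2
    rw [ekey, ← hswapG] at hkey
    have hfin : 0 ≤ ∫ x in Ω, ∫ y in Ω, G x y := by linarith
    calc (0:ℝ) ≤ ∫ x in Ω, ∫ y in Ω, G x y := hfin
      _ = ∫ x in Ω, Λf x θ :=
        setIntegral_congr_fun hΩm fun x hx => (hΛeq x (subset_closure hx)).symm
  -- pointwise identity
  have hpoint : ∀ x ∈ Ω, ∀ θ ∈ T,
      Φ x θ + ε ^ 2 * Ψ x θ + Λf x θ = μ * ξ x θ ^ 2 + ξ x θ ^ 2 * cf x θ := by
    intro x hx θ hθ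
    have h1 := hξpde x hx θ hθ
    have h2 := hpde x hx θ hθ
    have hn0 : n x θ ≠ 0 := (hpos x (subset_closure hx) θ (hTsub hθ)).ne'
    have hP2 : n x θ * (ξ x θ ^ 2 / n x θ) = ξ x θ ^ 2 := by field_simp
    simp only [hΦdef, hΨdef, hΛdef, hPdef, hcfdef]
    linear_combination ξ x θ * h1 - ξ x θ ^ 2 / n x θ * h2
      - (R x θ - τ * rhoTot A n x - (1 - τ) * n x θ) * hP2
  -- normalization in T form
  have hnormT : ∫ x in Ω, ∫ θ in T, ξ x θ ^ 2 = 1 := by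
    rw [← hξnorm]
    exact setIntegral_congr_fun hΩm fun x _ => (hIT fun θ => ξ x θ ^ 2).symm
  -- splitting of inner integrals
  have hLHSsplit : ∀ x ∈ closure Ω, ∫ θ in T, (Φ x θ + ε ^ 2 * Ψ x θ + Λf x θ)
      = (∫ θ in T, Φ x θ) + ε ^ 2 * (∫ θ in T, Ψ x θ) + ∫ θ in T, Λf x θ := by
    intro x hx
    have iΦ := sliceT Φ hΦco x hx
    have iΨ := sliceT Ψ hΨco x hx
    have iΛ := sliceT Λf hΛco x hx
    have s1 : ∫ θ in T, (Φ x θ + ε ^ 2 * Ψ x θ + Λf x θ)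
        = (∫ θ in T, (Φ x θ + ε ^ 2 * Ψ x θ)) + ∫ θ in T, Λf x θ :=
      integral_add (iΦ.add (iΨ.const_mul (ε ^ 2))) iΛ
    have s2 : ∫ θ in T, (Φ x θ + ε ^ 2 * Ψ x θ)
        = (∫ θ in T, Φ x θ) + ∫ θ in T, ε ^ 2 * Ψ x θ :=
      integral_add iΦ (iΨ.const_mul (ε ^ 2))
    have s3 : ∫ θ in T, ε ^ 2 * Ψ x θ = ε ^ 2 * ∫ θ in T, Ψ x θ := integral_const_mul _ _
    rw [s1, s2, s3]
  have hRHSsplit : ∀ x ∈ closure Ω, ∫ θ in T, (μ * ξ x θ ^ 2 + ξ x θ ^ 2 * cf x θ)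
      = μ * (∫ θ in T, ξ x θ ^ 2) + ∫ θ in T, ξ x θ ^ 2 * cf x θ := by
    intro x hx
    have i1 := sliceT (fun x θ => ξ x θ ^ 2) hξ2co x hx
    have i2 := sliceT (fun x θ => ξ x θ ^ 2 * cf x θ) hξ2cco x hx
    have s1 : ∫ θ in T, (μ * ξ x θ ^ 2 + ξ x θ ^ 2 * cf x θ)
        = (∫ θ in T, μ * ξ x θ ^ 2) + ∫ θ in T, ξ x θ ^ 2 * cf x θ :=
      integral_add (i1.const_mul μ) i2
    have s2 : ∫ θ in T, μ * ξ x θ ^ 2 = μ * ∫ θ in T, ξ x θ ^ 2 := integral_const_mul _ _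
    rw [s1, s2]
  -- the double-integral identity
  have hdouble : μ * 1 + (∫ x in Ω, ∫ θ in T, ξ x θ ^ 2 * cf x θ)
      = (∫ x in Ω, ∫ θ in T, Φ x θ) + ε ^ 2 * (∫ x in Ω, ∫ θ in T, Ψ x θ)
        + ∫ x in Ω, ∫ θ in T, Λf x θ := by
    have j1 : IntegrableOn (fun x => μ * ∫ θ in T, ξ x θ ^ 2) Ω :=
      (innerInt (fun x θ => ξ x θ ^ 2) hξ2co).const_mul μ
    have j2 : IntegrableOn (fun x => ∫ θ in T, ξ x θ ^ 2 * cf x θ) Ω :=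
      innerInt (fun x θ => ξ x θ ^ 2 * cf x θ) hξ2cco
    have jΦ : IntegrableOn (fun x => ∫ θ in T, Φ x θ) Ω := innerInt Φ hΦco
    have jΨ : IntegrableOn (fun x => ε ^ 2 * ∫ θ in T, Ψ x θ) Ω :=
      (innerInt Ψ hΨco).const_mul _
    have jΛ : IntegrableOn (fun x => ∫ θ in T, Λf x θ) Ω := innerInt Λf hΛco
    have e1 : ∫ x in Ω, ∫ θ in T, (μ * ξ x θ ^ 2 + ξ x θ ^ 2 * cf x θ)
        = ∫ x in Ω, ∫ θ in T, (Φ x θ + ε ^ 2 * Ψ x θ + Λf x θ) :=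
      setIntegral_congr_fun hΩm fun x hx =>
        setIntegral_congr_fun hTm fun θ hθ => (hpoint x hx θ hθ).symm
    have e2 : ∫ x in Ω, ∫ θ in T, (μ * ξ x θ ^ 2 + ξ x θ ^ 2 * cf x θ)
        = μ * 1 + ∫ x in Ω, ∫ θ in T, ξ x θ ^ 2 * cf x θ := by
      calc ∫ x in Ω, ∫ θ in T, (μ * ξ x θ ^ 2 + ξ x θ ^ 2 * cf x θ)
          = ∫ x in Ω, ((μ * ∫ θ in T, ξ x θ ^ 2) + ∫ θ in T, ξ x θ ^ 2 * cf x θ) :=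
            setIntegral_congr_fun hΩm fun x hx => hRHSsplit x (subset_closure hx)
        _ = (∫ x in Ω, μ * ∫ θ in T, ξ x θ ^ 2) + ∫ x in Ω, ∫ θ in T, ξ x θ ^ 2 * cf x θ :=
            integral_add j1 j2
        _ = μ * 1 + ∫ x in Ω, ∫ θ in T, ξ x θ ^ 2 * cf x θ := by
            have s2 : ∫ x in Ω, (μ * ∫ θ in T, ξ x θ ^ 2)
                = μ * ∫ x in Ω, ∫ θ in T, ξ x θ ^ 2 := integral_const_mul _ _
            rw [s2, hnormT]
    have e3 : ∫ x in Ω, ∫ θ in T, (Φ x θ + ε ^ 2 * Ψ x θ + Λf x θ)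
        = (∫ x in Ω, ∫ θ in T, Φ x θ) + ε ^ 2 * (∫ x in Ω, ∫ θ in T, Ψ x θ)
          + ∫ x in Ω, ∫ θ in T, Λf x θ := by
      calc ∫ x in Ω, ∫ θ in T, (Φ x θ + ε ^ 2 * Ψ x θ + Λf x θ)
          = ∫ x in Ω, ((∫ θ in T, Φ x θ) + ε ^ 2 * (∫ θ in T, Ψ x θ) + ∫ θ in T, Λf x θ) :=
            setIntegral_congr_fun hΩm fun x hx => hLHSsplit x (subset_closure hx)
        _ = (∫ x in Ω, ∫ θ in T, Φ x θ) + ε ^ 2 * (∫ x in Ω, ∫ θ in T, Ψ x θ)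
            + ∫ x in Ω, ∫ θ in T, Λf x θ := by
            have s1 : ∫ x in Ω, ((∫ θ in T, Φ x θ) + ε ^ 2 * (∫ θ in T, Ψ x θ) + ∫ θ in T, Λf x θ)
                = (∫ x in Ω, ((∫ θ in T, Φ x θ) + ε ^ 2 * (∫ θ in T, Ψ x θ)))
                  + ∫ x in Ω, ∫ θ in T, Λf x θ := integral_add (jΦ.add jΨ) jΛ
            have s2 : ∫ x in Ω, ((∫ θ in T, Φ x θ) + ε ^ 2 * (∫ θ in T, Ψ x θ))
                = (∫ x in Ω, ∫ θ in T, Φ x θ) + ∫ x in Ω, ε ^ 2 * ∫ θ in T, Ψ x θ :=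
              integral_add jΦ jΨ
            have s3 : ∫ x in Ω, (ε ^ 2 * ∫ θ in T, Ψ x θ)
                = ε ^ 2 * ∫ x in Ω, ∫ θ in T, Ψ x θ := integral_const_mul _ _
            rw [s1, s2, s3]
    rw [← e2, e1, e3]
  -- nonnegativity of the three parts
  have hΦnn : 0 ≤ ∫ x in Ω, ∫ θ in T, Φ x θ := by
    rw [swap Φ hΦco]
    exact setIntegral_nonneg hTm fun θ hθ => partΦ θ hθ
  have hΨnn : 0 ≤ ∫ x in Ω, ∫ θ in T, Ψ x θ :=
    setIntegral_nonneg hΩm fun x hx => partΨ x hx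
  have hΛnn : 0 ≤ ∫ x in Ω, ∫ θ in T, Λf x θ := by
    rw [swap Λf hΛco]
    exact setIntegral_nonneg hTm fun θ hθ => partΛ θ hθ
  have hKEY : -μ ≤ ∫ x in Ω, ∫ θ in T, ξ x θ ^ 2 * cf x θ := by
    nlinarith [mul_nonneg (sq_nonneg ε) hΨnn]
  -- final bound
  have hinnerbound : ∀ x ∈ Ω,
      ∫ θ in T, ξ x θ ^ 2 * cf x θ ≤ S * max 1 (2 * A) * rhoTot A n x := by
    intro x hx
    have hx' := subset_closure hx
    have i1 : IntegrableOn (fun θ => ξ x θ ^ 2 * cf x θ) T :=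
      sliceT (fun x θ => ξ x θ ^ 2 * cf x θ) hξ2cco x hx'
    have i2 : IntegrableOn (fun θ => S * cf x θ) T :=
      (sliceT cf hcfc.continuousOn x hx').const_mul S
    have step1 : ∫ θ in T, ξ x θ ^ 2 * cf x θ ≤ ∫ θ in T, S * cf x θ :=
      setIntegral_mono_on i1 i2 hTm fun θ hθ =>
        mul_le_mul_of_nonneg_right (hSle x hx θ hθ) (hcf0 x hx' θ (hTsub hθ))
    have hρx := hρ0 x hx'
    have hvolT : (volume T).toReal = 2 * A := by
      rw [hT, Real.volume_Ioo, ENNReal.toReal_ofReal (by linarith)]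
      ring
    have hTn : ∫ θ in T, n x θ = rhoTot A n x := by
      simp only [rhoTot]
      exact (hIT fun θ => n x θ).symm
    have step2 : ∫ θ in T, S * cf x θ = S * (τ * (2 * A) + (1 - τ)) * rhoTot A n x := by
      have e : EqOn (fun θ => S * cf x θ)
          (fun θ => S * τ * rhoTot A n x + S * (1 - τ) * n x θ) T := fun θ _ => by
        simp only [hcfdef]; ring
      have s1 : ∫ θ in T, (S * τ * rhoTot A n x + S * (1 - τ) * n x θ)
          = (∫ _θ in T, S * τ * rhoTot A n x) + ∫ θ in T, S * (1 - τ) * n x θ :=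
        integral_add (integrableOn_const hTvol)
          ((sliceT n hnc.continuousOn x hx').const_mul _)
      have s2 : ∫ θ in T, S * (1 - τ) * n x θ = S * (1 - τ) * ∫ θ in T, n x θ :=
        integral_const_mul _ _
      rw [setIntegral_congr_fun hTm e, s1, s2, hTn, setIntegral_const, smul_eq_mul, measureReal_def, hvolT]
      ring
    have step3 : S * (τ * (2 * A) + (1 - τ)) * rhoTot A n x
        ≤ S * max 1 (2 * A) * rhoTot A n x := by
      apply mul_le_mul_of_nonneg_right _ hρx
      apply mul_le_mul_of_nonneg_left _ hSpos
      rcases le_total 1 (2 * A) with h | h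
      · rw [max_eq_right h]; nlinarith
      · rw [max_eq_left h]; nlinarith
    linarith
  have houter : ∫ x in Ω, ∫ θ in T, ξ x θ ^ 2 * cf x θ
      ≤ ∫ x in Ω, S * max 1 (2 * A) * rhoTot A n x := by
    apply setIntegral_mono_on (innerInt (fun x θ => ξ x θ ^ 2 * cf x θ) hξ2cco) _ hΩm hinnerbound
    exact (((continuous_const.mul hρc).continuousOn.integrableOn_compact
      hcΩcomp).mono_set subset_closure)
  have hfinal : ∫ x in Ω, S * max 1 (2 * A) * rhoTot A n x
      = S * max 1 (2 * A) * ∫ x in Ω, rhoTot A n x := integral_const_mul _ _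
  have hgoal : -μ ≤ S * max 1 (2 * A) * ∫ x in Ω, rhoTot A n x := by linarith
  simpa only [rhoTot] using hgoal
end
end

section
/- Let Ω ⊂ ℝ be a bounded measurable set, A > 0, ε > 0, and let u : closure(Ω) × [−A, A] → ℝ be C¹. Define p(x, θ) = ε^{−2} |∂_x u(x, θ)|² + |∂_θ u(x, θ)|², and suppose p attains its maximum over closure(Ω) × [−A, A] at the point (x₀, θ₀). Then for every bounded measurable function K : ℝ → ℝ with K ≥ 0, one has ∫_Ω [p(x₀, θ₀) − ∂_θ u(x₀, θ₀) · ∂_θ u(y, θ₀)] · e^{(u(y, θ₀) − u(x₀, θ₀))/ε} · K(x₀ − y) dy ≥ 0. -/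
open MeasureTheory Set Real

noncomputable section

/-- sign of the nonlocal term at a maximum point of the Bernstein
auxiliary function `p = ε⁻²|∂_x u|² + |∂_θ u|²`. -/
theorem bernstein_nonlocal_estimate
    (Ω : Set ℝ) (hΩmeas : MeasurableSet Ω) (hΩbdd : Bornology.IsBounded Ω)
    (A ε : ℝ) (hA : 0 < A) (hε : 0 < ε)
    (u : ℝ → ℝ → ℝ) (hu : ContDiff ℝ 1 (Function.uncurry u))
    (p : ℝ → ℝ → ℝ)
    (hp : ∀ x θ, p x θ = (pdx u x θ) ^ 2 / ε ^ 2 + (pdt u x θ) ^ 2)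
    (x₀ θ₀ : ℝ) (hx₀ : x₀ ∈ closure Ω) (hθ₀ : θ₀ ∈ Icc (-A) A)
    (hmax : ∀ x ∈ closure Ω, ∀ θ ∈ Icc (-A) A, p x θ ≤ p x₀ θ₀)
    (K : ℝ → ℝ) (hKmeas : Measurable K) (hKbdd : ∃ M, ∀ x, |K x| ≤ M)
    (hKnonneg : ∀ x, 0 ≤ K x) :
    0 ≤ ∫ y in Ω, (p x₀ θ₀ - pdt u x₀ θ₀ * pdt u y θ₀) *
        Real.exp ((u y θ₀ - u x₀ θ₀) / ε) * K (x₀ - y) := by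
  apply setIntegral_nonneg hΩmeas
  intro y hy
  have hyc : y ∈ closure Ω := subset_closure hy
  have h1 : p y θ₀ ≤ p x₀ θ₀ := hmax y hyc θ₀ hθ₀
  have h2 : (pdt u y θ₀) ^ 2 ≤ p y θ₀ := by
    rw [hp]; nlinarith [sq_nonneg (pdx u y θ₀), sq_nonneg ε, div_nonneg (sq_nonneg (pdx u y θ₀)) (sq_nonneg ε)]
  have h3 : (pdt u x₀ θ₀) ^ 2 ≤ p x₀ θ₀ := by
    rw [hp]; nlinarith [div_nonneg (sq_nonneg (pdx u x₀ θ₀)) (sq_nonneg ε)]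
  have key : pdt u x₀ θ₀ * pdt u y θ₀ ≤ p x₀ θ₀ := by
    nlinarith [sq_nonneg (pdt u x₀ θ₀ - pdt u y θ₀)]
  have := Real.exp_nonneg ((u y θ₀ - u x₀ θ₀) / ε)
  exact mul_nonneg (mul_nonneg (by linarith) (Real.exp_nonneg _)) (hKnonneg _)
end
end
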